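/- arXiv:1203.3258 — 4 statements merged into one kernel-verified Lean document; each statement's English description precedes it below -/
import Mathlib

section
/- Let 1 < R0 < R1, let α0 = I(R0) and α1 = I(R1) be the unique positive roots of r + R0(e^{-r} - 1) and r + R1(e^{-r} - 1) respectively, let ε ∈ (0,1) and D > 0 satisfy e^{-α1 D} < ε, and define t_s* = (R0/(R1 - R0))·[(1/α0)·log(1/(ε - e^{-α1 D})) - D]. Then for every t_s ≥ t_s*, exp(-α0(D - t_s) + R1 t_s (e^{-α0} - 1)) ≤ ε - e^{-α1 D}, with equality when t_s = t_s*. -/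
/-- Feasibility of the off-line policy (Theorem 3, analytic core). With `α0 = I(R0)` and
`α1 = I(R1)` the unique positive roots of `r + R0 * (exp (-r) - 1)` and
`r + R1 * (exp (-r) - 1)`, `ε ∈ (0,1)`, `D > 0` with `exp (-α1 * D) < ε`, and
`t_s* = (R0/(R1 - R0)) * ((1/α0) * log (1/(ε - exp (-α1 * D))) - D)`, we have, for every
`t_s ≥ t_s*`, `exp (-α0 * (D - t_s) + R1 * t_s * (exp (-α0) - 1)) ≤ ε - exp (-α1 * D)`,
with equality when `t_s = t_s*`. -/
theorem offline_policy_feasibility (R0 R1 α0 α1 ε D : ℝ)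
    (hR0 : 1 < R0) (hR01 : R0 < R1)
    (hα0_pos : 0 < α0) (hα0_root : α0 + R0 * (Real.exp (-α0) - 1) = 0)
    (hα1_pos : 0 < α1) (hα1_root : α1 + R1 * (Real.exp (-α1) - 1) = 0)
    (hε0 : 0 < ε) (hε1 : ε < 1) (hD : 0 < D) (hfeas : Real.exp (-α1 * D) < ε) :
    (∀ ts : ℝ,
        (R0 / (R1 - R0)) * ((1 / α0) * Real.log (1 / (ε - Real.exp (-α1 * D))) - D) ≤ ts →
        Real.exp (-α0 * (D - ts) + R1 * ts * (Real.exp (-α0) - 1)) ≤ ε - Real.exp (-α1 * D)) ∧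
      Real.exp (-α0 * (D - ((R0 / (R1 - R0)) * ((1 / α0) * Real.log (1 / (ε - Real.exp (-α1 * D))) - D)))
            + R1 * ((R0 / (R1 - R0)) * ((1 / α0) * Real.log (1 / (ε - Real.exp (-α1 * D))) - D))
              * (Real.exp (-α0) - 1))
        = ε - Real.exp (-α1 * D) := by
  have hR0p : (0:ℝ) < R0 := by linarith
  have hRd : 0 < R1 - R0 := by linarith
  have hE : 0 < ε - Real.exp (-α1 * D) := by linarith
  set E := ε - Real.exp (-α1 * D) with hEdef
  have hc : Real.exp (-α0) - 1 = -α0 / R0 := by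
    field_simp
    linarith [hα0_root]
  have hlog : Real.log (1 / E) = -Real.log E := by
    rw [one_div, Real.log_inv]
  set ts0 := (R0 / (R1 - R0)) * ((1 / α0) * Real.log (1 / E) - D) with hts0
  have key : ∀ ts : ℝ, -α0 * (D - ts) + R1 * ts * (Real.exp (-α0) - 1)
      = -α0 * D - (α0 * (R1 - R0) / R0) * ts := by
    intro ts; rw [hc]; field_simp; ring
  have hat : -α0 * D - (α0 * (R1 - R0) / R0) * ts0 = Real.log E := by
    rw [hts0, hlog]
    field_simp
    ring
  constructor
  · intro ts hts
    rw [key]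
    have hmono : -α0 * D - (α0 * (R1 - R0) / R0) * ts ≤ Real.log E := by
      rw [← hat]
      have hk : 0 < α0 * (R1 - R0) / R0 := by positivity
      nlinarith
    calc Real.exp (-α0 * D - (α0 * (R1 - R0) / R0) * ts)
        ≤ Real.exp (Real.log E) := Real.exp_le_exp.mpr hmono
      _ = E := Real.exp_log hE
  · rw [key, hat, Real.exp_log hE]
end

section
/- Let 0 < α0 < 2, α1 > α0, and set β = α1/(α0(1 - α0/2)); then β > 1. Let ε ∈ (0,1) and D > 0 satisfy e^{-α1 D} < ε, and define T* = (1/α1)·log((ε + β(1 - e^{-α1 D}) - 1)/(ε - e^{-α1 D})). Then the argument of the logarithm is strictly greater than 1 (so T* > 0), and (β - 1)(1 - e^{-α1 D})/(1 - e^{-α1 T*}) + 1 - β(1 - e^{-α1 D}) = ε. -/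
open Real

lemma one_lt_div_mul_one_sub_half {a c : ℝ} (ha : 0 < a) (ha2 : a < 2) (hac : a < c) :
    1 < c / (a * (1 - a / 2)) := by
  have hpos : 0 < a * (1 - a / 2) := by nlinarith
  rw [one_lt_div hpos]
  nlinarith

lemma exp_neg_mul_one_div_mul_log {a r : ℝ} (ha : a ≠ 0) (hr : 0 < r) :
    exp (-a * ((1 / a) * log r)) = r⁻¹ := by
  rw [show -a * ((1 / a) * log r) = -log r by field_simp, exp_neg, exp_log hr]

section Threshold

variable {β e ε : ℝ}

lemma threshold_numerator_eq : ε + β * (1 - e) - 1 = (ε - e) + (β - 1) * (1 - e) := by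
  ring

lemma threshold_gap_pos (hβ : 1 < β) (he : e < 1) : 0 < (β - 1) * (1 - e) :=
  mul_pos (sub_pos.2 hβ) (sub_pos.2 he)

lemma one_lt_threshold_ratio (hβ : 1 < β) (he : e < 1) (hε : e < ε) :
    1 < (ε + β * (1 - e) - 1) / (ε - e) := by
  rw [one_lt_div (sub_pos.2 hε), threshold_numerator_eq]
  linarith [threshold_gap_pos hβ he]

/-- With `c = (β - 1)(1 - e)` and `d = ε - e` the ratio is `(d + c) / d`, so
`1 - ratio⁻¹ = c / (d + c)` and the first term collapses to `d + c`. -/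
lemma threshold_identity (hβ : 1 < β) (he : e < 1) (hε : e < ε) :
    (β - 1) * (1 - e) / (1 - ((ε + β * (1 - e) - 1) / (ε - e))⁻¹) + 1 - β * (1 - e) = ε := by
  have hc := threshold_gap_pos hβ he
  have hd : 0 < ε - e := sub_pos.2 hε
  rw [threshold_numerator_eq, inv_div,
    show 1 - (ε - e) / (ε - e + (β - 1) * (1 - e)) = (β - 1) * (1 - e) / (ε - e + (β - 1) * (1 - e))
      by field_simp; ring,
    div_div_cancel₀ hc.ne']
  ring

end Threshold

theorem risky_policy_threshold_feasibility_general (α0 α1 ε D : ℝ)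
    (hα0_pos : 0 < α0) (hα0_lt : α0 < 2) (hα01 : α0 < α1)
    (hD : 0 < D) (hfeas : Real.exp (-α1 * D) < ε) :
    1 < α1 / (α0 * (1 - α0 / 2)) ∧
    1 < (ε + (α1 / (α0 * (1 - α0 / 2))) * (1 - Real.exp (-α1 * D)) - 1)
          / (ε - Real.exp (-α1 * D)) ∧
    ((α1 / (α0 * (1 - α0 / 2))) - 1) * (1 - Real.exp (-α1 * D))
          / (1 - Real.exp (-α1 * ((1 / α1) * Real.log
              ((ε + (α1 / (α0 * (1 - α0 / 2))) * (1 - Real.exp (-α1 * D)) - 1)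
                / (ε - Real.exp (-α1 * D))))))
        + 1 - (α1 / (α0 * (1 - α0 / 2))) * (1 - Real.exp (-α1 * D)) = ε := by
  have hα1 : 0 < α1 := hα0_pos.trans hα01
  have hβ := one_lt_div_mul_one_sub_half hα0_pos hα0_lt hα01
  have he : exp (-α1 * D) < 1 := exp_lt_one_iff.2 (by nlinarith)
  have hratio := one_lt_threshold_ratio hβ he hfeas
  rw [exp_neg_mul_one_div_mul_log hα1.ne' (zero_lt_one.trans hratio)]
  exact ⟨hβ, hratio, threshold_identity hβ he hfeas⟩

/-- Feasibility of the online risky policy for `D ≤ D̄` (Theorem 5, analytic core). With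
`0 < α0 < 2`, `α1 > α0`, `β = α1 / (α0 * (1 - α0/2))`, `ε ∈ (0,1)`, `D > 0` with
`exp (-α1 * D) < ε`, and
`T* = (1/α1) * log ((ε + β * (1 - exp (-α1 * D)) - 1) / (ε - exp (-α1 * D)))`:
`β > 1`, the argument of the logarithm is `> 1` (so `T* > 0`), and
`(β - 1) * (1 - exp (-α1 * D)) / (1 - exp (-α1 * T*)) + 1 - β * (1 - exp (-α1 * D)) = ε`. -/
theorem risky_policy_threshold_feasibility (α0 α1 ε D : ℝ)
    (hα0_pos : 0 < α0) (hα0_lt : α0 < 2) (hα01 : α0 < α1)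
    (hε0 : 0 < ε) (hε1 : ε < 1) (hD : 0 < D) (hfeas : Real.exp (-α1 * D) < ε) :
    1 < α1 / (α0 * (1 - α0 / 2)) ∧
    1 < (ε + (α1 / (α0 * (1 - α0 / 2))) * (1 - Real.exp (-α1 * D)) - 1)
          / (ε - Real.exp (-α1 * D)) ∧
    ((α1 / (α0 * (1 - α0 / 2))) - 1) * (1 - Real.exp (-α1 * D))
          / (1 - Real.exp (-α1 * ((1 / α1) * Real.log
              ((ε + (α1 / (α0 * (1 - α0 / 2))) * (1 - Real.exp (-α1 * D)) - 1)
                / (ε - Real.exp (-α1 * D))))))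
        + 1 - (α1 / (α0 * (1 - α0 / 2))) * (1 - Real.exp (-α1 * D)) = ε :=
  risky_policy_threshold_feasibility_general α0 α1 ε D hα0_pos hα0_lt hα01 hD hfeas
end

section
/- Fix constants θ1 > θ0 > 0, let T > 0, define p(T) = e^{-θ1 T}/(θ0/θ1 + (1 - θ0/θ1)e^{-θ1 T}), and define p^T(D) = e^{-θ1 D} + p(T)(1 - θ0/θ1)(1 - e^{-θ1 D}) for 0 ≤ D ≤ T and p^T(D) = p(T)·e^{-θ0(D - T)} for D ≥ T. Then D ↦ p^T(D) is continuously differentiable on (0, ∞) (in particular the two branches agree in value and in first derivative at D = T), is twice continuously differentiable on (0, T) and on (T, ∞), satisfies (p^T)''(D) + θ1 (p^T)'(D) = 0 for D ∈ (0, T) and (p^T)''(D) + θ0 (p^T)'(D) = 0 for D ∈ (T, ∞), and satisfies p^T(0) = 1 and p^T(D) → 0 as D → ∞. -/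
/-!
Each branch of `p^T` is a harmonic function `A + B e^{-a (D - x₀)}` of the generator
`f'' + a f'` on its side of the threshold, so the two differential equations, `p^T(0) = 1` and
the limit at infinity are read off the branches. The constant `p(T)` is exactly the one making
the branches agree in value and slope at `T` (smooth pasting); a function glued from two `C¹`
pieces that paste smoothly is `C¹`.
-/

open Set Filter Topology

section Pasting

theorem ite_le_eventuallyEq_of_lt {β : Type*} {f g : ℝ → β} {t x : ℝ} (hx : x < t) :
    (fun y => if y ≤ t then f y else g y) =ᶠ[𝓝 x] f := by
  filter_upwards [Iio_mem_nhds hx] with y hy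
  rw [if_pos (le_of_lt hy)]

theorem ite_le_eventuallyEq_of_gt {β : Type*} {f g : ℝ → β} {t x : ℝ} (hx : t < x) :
    (fun y => if y ≤ t then f y else g y) =ᶠ[𝓝 x] g := by
  filter_upwards [Ioi_mem_nhds hx] with y hy
  rw [if_neg (not_le.mpr hy)]

variable {F : Type*} [NormedAddCommGroup F] [NormedSpace ℝ F] {f g : ℝ → F} {t : ℝ}

theorem HasDerivAt.ite_le_self {f' : F} (hf : HasDerivAt f f' t) (hg : HasDerivAt g f' t)
    (hfg : f t = g t) : HasDerivAt (fun y => if y ≤ t then f y else g y) f' t := by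
  have hleft : HasDerivWithinAt (fun y => if y ≤ t then f y else g y) f' (Iic t) t :=
    hf.hasDerivWithinAt.congr (fun y hy => if_pos hy) (if_pos le_rfl)
  have hright : HasDerivWithinAt (fun y => if y ≤ t then f y else g y) f' (Ici t) t := by
    refine hg.hasDerivWithinAt.congr (fun y hy => ?_) (by rw [if_pos le_rfl, hfg])
    rcases (mem_Ici.mp hy).eq_or_lt with rfl | hty
    · rw [if_pos le_rfl, hfg]
    · rw [if_neg (not_le.mpr hty)]
  simpa only [Iic_union_Ici, hasDerivWithinAt_univ] using hleft.union hright

theorem hasDerivAt_ite_le (hf : Differentiable ℝ f) (hg : Differentiable ℝ g)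
    (hval : f t = g t) (hslope : deriv f t = deriv g t) (x : ℝ) :
    HasDerivAt (fun y => if y ≤ t then f y else g y)
      (if x ≤ t then deriv f x else deriv g x) x := by
  rcases lt_trichotomy x t with hxt | rfl | hxt
  · rw [if_pos hxt.le]
    exact (hf x).hasDerivAt.congr_of_eventuallyEq (ite_le_eventuallyEq_of_lt hxt)
  · rw [if_pos le_rfl]
    exact (hf x).hasDerivAt.ite_le_self (hslope ▸ (hg x).hasDerivAt) hval
  · rw [if_neg (not_le.mpr hxt)]
    exact (hg x).hasDerivAt.congr_of_eventuallyEq (ite_le_eventuallyEq_of_gt hxt)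

theorem contDiff_one_ite_le (hf : ContDiff ℝ 1 f) (hg : ContDiff ℝ 1 g)
    (hval : f t = g t) (hslope : deriv f t = deriv g t) :
    ContDiff ℝ 1 (fun y => if y ≤ t then f y else g y) := by
  rw [contDiff_one_iff_deriv] at hf hg ⊢
  have hderiv := hasDerivAt_ite_le hf.1 hg.1 hval hslope
  refine ⟨fun x => (hderiv x).differentiableAt, ?_⟩
  rw [funext fun x => (hderiv x).deriv]
  exact hf.2.if_le hg.2 continuous_id continuous_const fun x hx => hx ▸ hslope

end Pasting

section DriftHarmonic

/-- The harmonic functions of the generator `f'' + a f'`. -/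
noncomputable def driftHarmonic (A B a x₀ x : ℝ) : ℝ :=
  A + B * Real.exp (-a * (x - x₀))

variable {A B a x₀ : ℝ}

theorem hasDerivAt_driftHarmonic (x : ℝ) :
    HasDerivAt (driftHarmonic A B a x₀) (-a * B * Real.exp (-a * (x - x₀))) x := by
  have hinner : HasDerivAt (fun y => -a * (y - x₀)) (-a) x := by
    simpa using ((hasDerivAt_id x).sub_const x₀).const_mul (-a)
  exact ((hinner.exp.const_mul B).const_add A).congr_deriv (by ring)

theorem deriv_driftHarmonic :
    deriv (driftHarmonic A B a x₀) = driftHarmonic 0 (-a * B) a x₀ := by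
  ext x
  rw [(hasDerivAt_driftHarmonic x).deriv, driftHarmonic, zero_add]

theorem contDiff_driftHarmonic {n : WithTop ℕ∞} : ContDiff ℝ n (driftHarmonic A B a x₀) := by
  unfold driftHarmonic
  fun_prop

theorem deriv_deriv_driftHarmonic_add (x : ℝ) :
    deriv (deriv (driftHarmonic A B a x₀)) x + a * deriv (driftHarmonic A B a x₀) x = 0 := by
  simp only [deriv_driftHarmonic, driftHarmonic]
  ring

theorem tendsto_driftHarmonic_atTop (ha : 0 < a) :
    Tendsto (driftHarmonic A B a x₀) atTop (𝓝 A) := by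
  have hexp : Tendsto (fun x => Real.exp (-a * (x - x₀))) atTop (𝓝 0) :=
    Real.tendsto_exp_atBot.comp <|
      (tendsto_const_mul_atBot_of_neg (neg_neg_of_pos ha)).2
        (tendsto_atTop_add_const_right _ _ tendsto_id)
  have hlim := (hexp.const_mul B).const_add A
  rwa [mul_zero, add_zero] at hlim

end DriftHarmonic

section SmoothPasting

variable {θ0 θ1 E p : ℝ}

theorem threshold_value_match (hden : θ0 / θ1 + (1 - θ0 / θ1) * E ≠ 0)
    (hp : p = E / (θ0 / θ1 + (1 - θ0 / θ1) * E)) :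
    p * (1 - θ0 / θ1) + (1 - p * (1 - θ0 / θ1)) * E = p := by
  rw [eq_div_iff hden] at hp
  linear_combination -hp

theorem threshold_slope_match (hθ1 : θ1 ≠ 0) (hden : θ0 / θ1 + (1 - θ0 / θ1) * E ≠ 0)
    (hp : p = E / (θ0 / θ1 + (1 - θ0 / θ1) * E)) :
    -θ1 * (1 - p * (1 - θ0 / θ1)) * E = -θ0 * p := by
  rw [eq_div_iff hden] at hp
  have hθ : θ1 * (θ0 / θ1) = θ0 := mul_div_cancel₀ θ0 hθ1
  linear_combination θ1 * hp - p * hθ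

end SmoothPasting

/-- Analytic characterization of the interruption probability `p^T` of the threshold policy
(Theorem 7, fluid model). With `θ1 > θ0 > 0`, `T > 0`,
`p(T) = exp (-θ1 T) / (θ0/θ1 + (1 - θ0/θ1) exp (-θ1 T))`, and `p^T` defined piecewise by
`p^T(D) = exp (-θ1 D) + p(T) (1 - θ0/θ1) (1 - exp (-θ1 D))` for `D ≤ T` and
`p^T(D) = p(T) exp (-θ0 (D - T))` for `D ≥ T`: `p^T` is continuously differentiable on
`(0, ∞)` (in particular the two branches agree in value and first derivative at `T`), is
twice continuously differentiable on `(0, T)` and on `(T, ∞)`, satisfies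
`(p^T)'' + θ1 (p^T)' = 0` on `(0, T)` and `(p^T)'' + θ0 (p^T)' = 0` on `(T, ∞)`,
`p^T(0) = 1`, and `p^T(D) → 0` as `D → ∞`. -/
theorem threshold_interruption_probability_characterization (θ0 θ1 T : ℝ)
    (hθ0 : 0 < θ0) (hθ01 : θ0 < θ1) (hT : 0 < T)
    (pT : ℝ) (hpT : pT = Real.exp (-θ1 * T) / (θ0 / θ1 + (1 - θ0 / θ1) * Real.exp (-θ1 * T)))
    (low high pTfun : ℝ → ℝ)
    (hlow : ∀ D : ℝ, low D = Real.exp (-θ1 * D) + pT * (1 - θ0 / θ1) * (1 - Real.exp (-θ1 * D)))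
    (hhigh : ∀ D : ℝ, high D = pT * Real.exp (-θ0 * (D - T)))
    (hfun : ∀ D : ℝ, pTfun D = if D ≤ T then low D else high D) :
    low T = high T ∧ deriv low T = deriv high T ∧
    ContDiffOn ℝ 1 pTfun (Ioi 0) ∧
    ContDiffOn ℝ 2 pTfun (Ioo 0 T) ∧ ContDiffOn ℝ 2 pTfun (Ioi T) ∧
    (∀ D ∈ Ioo 0 T, deriv (deriv pTfun) D + θ1 * deriv pTfun D = 0) ∧
    (∀ D ∈ Ioi T, deriv (deriv pTfun) D + θ0 * deriv pTfun D = 0) ∧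
    pTfun 0 = 1 ∧
    Tendsto pTfun atTop (nhds 0) := by
  have hθ1 : 0 < θ1 := hθ0.trans hθ01
  have hden : 0 < θ0 / θ1 + (1 - θ0 / θ1) * Real.exp (-θ1 * T) := by
    have hr1 : θ0 / θ1 < 1 := (div_lt_one hθ1).2 hθ01
    have hr0 : 0 < θ0 / θ1 := div_pos hθ0 hθ1
    positivity
  set c := pT * (1 - θ0 / θ1)
  obtain rfl : low = driftHarmonic c (1 - c) θ1 0 := by
    ext D; rw [hlow, driftHarmonic, sub_zero]; ring
  obtain rfl : high = driftHarmonic 0 pT θ0 T := by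
    ext D; rw [hhigh, driftHarmonic, zero_add]
  obtain rfl : pTfun = fun D => if D ≤ T then driftHarmonic c (1 - c) θ1 0 D
      else driftHarmonic 0 pT θ0 T D := funext hfun
  have hval : driftHarmonic c (1 - c) θ1 0 T = driftHarmonic 0 pT θ0 T T := by
    simpa [driftHarmonic] using threshold_value_match hden.ne' hpT
  have hslope : deriv (driftHarmonic c (1 - c) θ1 0) T = deriv (driftHarmonic 0 pT θ0 T) T := by
    simpa [deriv_driftHarmonic, driftHarmonic] using threshold_slope_match hθ1.ne' hden.ne' hpT
  refine ⟨hval, hslope,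
    (contDiff_one_ite_le contDiff_driftHarmonic contDiff_driftHarmonic hval hslope).contDiffOn,
    contDiff_driftHarmonic.contDiffOn.congr fun D hD => if_pos hD.2.le,
    contDiff_driftHarmonic.contDiffOn.congr fun D hD => if_neg (not_le.mpr hD),
    fun D hD => ?_, fun D hD => ?_, by simp [driftHarmonic, hT.le],
    (tendsto_driftHarmonic_atTop (B := pT) (x₀ := T) hθ0).congr' ?_⟩
  · have hnear := ite_le_eventuallyEq_of_lt
      (f := driftHarmonic c (1 - c) θ1 0) (g := driftHarmonic 0 pT θ0 T) hD.2
    rw [hnear.deriv.deriv_eq, hnear.deriv_eq]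
    exact deriv_deriv_driftHarmonic_add D
  · have hnear := ite_le_eventuallyEq_of_gt
      (f := driftHarmonic c (1 - c) θ1 0) (g := driftHarmonic 0 pT θ0 T) hD
    rw [hnear.deriv.deriv_eq, hnear.deriv_eq]
    exact deriv_deriv_driftHarmonic_add D
  · filter_upwards [eventually_gt_atTop T] with D hD
    rw [if_neg (not_le.mpr hD)]
end

section
/- Fix constants θ1 > θ0 > 0, let T > 0, define J(T) = (2/θ1²)·[1 - (1 + θ1 T)e^{-θ1 T}]/(θ0/θ1 + (1 - θ0/θ1)e^{-θ1 T}), and define J^T(D) = (J(T) + (2/θ1)T)·(1 - e^{-θ1 D})/(1 - e^{-θ1 T}) - (2/θ1)D for 0 ≤ D ≤ T and J^T(D) = e^{-θ0(D - T)}·J(T) for D ≥ T. Then D ↦ J^T(D) is continuously differentiable on (0, ∞) (in particular the two branches agree in value and in first derivative at D = T), is twice continuously differentiable on (0, T) and on (T, ∞), satisfies (J^T)''(D) + θ1 (J^T)'(D) + 2 = 0 for D ∈ (0, T) and (J^T)''(D) + θ0 (J^T)'(D) = 0 for D ∈ (T, ∞), and satisfies J^T(0) = 0 and J^T(D) → 0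 as D → ∞. -/
/-!
Both branches have the form `α + β exp (-θ (x - s)) + γ x`, which solves
`f'' + θ f' = θ γ`; this gives the two differential equations, the smoothness on each open
piece, `J^T(0) = 0` and the decay at infinity. The branches agree in value at `T` for every
choice of `J(T)`, and `J(T)` is exactly the value for which their slopes at `T` agree as well;
two `C¹` functions glued with matching value and slope are `C¹`.
-/

open Set Filter Real Topology

section Gluing

variable {f g : ℝ → ℝ} {a : ℝ}

theorem hasDerivAt_piecewise_le (hf : Differentiable ℝ f) (hg : Differentiable ℝ g)
    (hval : f a = g a) (hder : deriv f a = deriv g a) (x : ℝ) :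
    HasDerivAt (fun y => if y ≤ a then f y else g y)
      (if x ≤ a then deriv f x else deriv g x) x := by
  have hleft : EqOn (fun y => if y ≤ a then f y else g y) f (Iic a) :=
    fun y hy => if_pos hy
  have hright : EqOn (fun y => if y ≤ a then f y else g y) g (Ici a) := by
    intro y hy
    rcases (mem_Ici.1 hy).eq_or_lt with rfl | hy
    · simp [hval]
    · exact if_neg (not_le.2 hy)
  rcases lt_trichotomy x a with hx | rfl | hx
  · rw [if_pos hx.le]
    exact (hf x).hasDerivAt.congr_of_eventuallyEq
      (eventually_of_mem (Iio_mem_nhds hx) fun y hy => hleft (mem_Iic.2 (le_of_lt hy)))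
  · rw [if_pos le_rfl]
    have hU := ((hf x).hasDerivAt.hasDerivWithinAt.congr hleft (hleft self_mem_Iic)).union
      (hder ▸ (hg x).hasDerivAt.hasDerivWithinAt.congr hright (hright self_mem_Ici))
    rw [Iic_union_Ici, hasDerivWithinAt_univ] at hU
    exact hU
  · rw [if_neg (not_le.2 hx)]
    exact (hg x).hasDerivAt.congr_of_eventuallyEq
      (eventually_of_mem (Ioi_mem_nhds hx) fun y hy => hright (mem_Ici.2 (le_of_lt hy)))

theorem contDiff_one_piecewise_le (hf : ContDiff ℝ 1 f) (hg : ContDiff ℝ 1 g)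
    (hval : f a = g a) (hder : deriv f a = deriv g a) :
    ContDiff ℝ 1 (fun x => if x ≤ a then f x else g x) := by
  have hF := hasDerivAt_piecewise_le (hf.differentiable one_ne_zero)
    (hg.differentiable one_ne_zero) hval hder
  rw [contDiff_one_iff_deriv]
  refine ⟨fun x => (hF x).differentiableAt, ?_⟩
  rw [funext fun x => (hF x).deriv]
  exact (hf.continuous_deriv le_rfl).if_le (hg.continuous_deriv le_rfl) continuous_id
    continuous_const fun x hx => hx ▸ hder

end Gluing

section ExpLin

noncomputable def expLin (θ s α β γ : ℝ) (x : ℝ) : ℝ := α + β * exp (-θ * (x - s)) + γ * x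

variable {θ s α β γ : ℝ}

theorem hasDerivAt_expLin (x : ℝ) :
    HasDerivAt (expLin θ s α β γ) (expLin θ s γ (-θ * β) 0 x) x := by
  have hlin : HasDerivAt (fun y => -θ * (y - s)) (-θ) x := by
    simpa using ((hasDerivAt_id x).sub_const s).const_mul (-θ)
  refine (((hlin.exp.const_mul β).const_add α).add
    ((hasDerivAt_id x).const_mul γ)).congr_deriv ?_
  simp only [expLin]
  ring

theorem deriv_expLin : deriv (expLin θ s α β γ) = expLin θ s γ (-θ * β) 0 :=
  funext fun x => (hasDerivAt_expLin x).deriv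

theorem contDiff_expLin {n : WithTop ℕ∞} : ContDiff ℝ n (expLin θ s α β γ) := by
  unfold expLin
  fun_prop

theorem deriv_deriv_expLin_add (x : ℝ) :
    deriv (deriv (expLin θ s α β γ)) x + θ * deriv (expLin θ s α β γ) x = θ * γ := by
  simp only [deriv_expLin, expLin]
  ring

theorem deriv_deriv_add_eq_of_eqOn_expLin {f : ℝ → ℝ} {U : Set ℝ} {x : ℝ} (hU : IsOpen U)
    (h : EqOn f (expLin θ s α β γ) U) (hx : x ∈ U) :
    deriv (deriv f) x + θ * deriv f x = θ * γ := by
  have hfx : f =ᶠ[𝓝 x] expLin θ s α β γ := eventually_of_mem (hU.mem_nhds hx) h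
  rw [hfx.deriv.deriv_eq, hfx.deriv_eq]
  exact deriv_deriv_expLin_add x

theorem tendsto_expLin_atTop (hθ : 0 < θ) : Tendsto (expLin θ s 0 β 0) atTop (𝓝 0) := by
  have h : Tendsto (fun x => θ * (x - s)) atTop atTop :=
    (tendsto_atTop_add_const_right atTop (-s) tendsto_id).const_mul_atTop hθ
  convert (tendsto_exp_neg_atTop_nhds_zero.comp h).const_mul β using 1
  · ext x
    simp only [expLin, Function.comp_apply]
    ring_nf
  · rw [mul_zero]

end ExpLin

/-- `E` plays the role of `exp (-θ1 * T)`. -/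
theorem threshold_value_smooth_pasting {θ0 θ1 T E J : ℝ} (hθ1 : θ1 ≠ 0) (hE : E ≠ 1)
    (hden : θ0 / θ1 + (1 - θ0 / θ1) * E ≠ 0)
    (hJ : J = (2 / θ1 ^ 2) * (1 - (1 + θ1 * T) * E) / (θ0 / θ1 + (1 - θ0 / θ1) * E)) :
    θ1 * ((J + (2 / θ1) * T) / (1 - E)) * E - 2 / θ1 = -θ0 * J := by
  have hE' : 1 - E ≠ 0 := sub_ne_zero.2 hE.symm
  have hJ' : J * (θ0 / θ1 + (1 - θ0 / θ1) * E) = 2 / θ1 ^ 2 * (1 - (1 + θ1 * T) * E) := by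
    rw [hJ]
    exact div_mul_cancel₀ _ hden
  field_simp at hJ' ⊢
  linear_combination hJ'

theorem threshold_branches_paste {θ0 θ1 T J K : ℝ}
    (hθ0 : 0 < θ0) (hθ1 : 0 < θ1) (hT : 0 < T)
    (hJ : J = (2 / θ1 ^ 2) * (1 - (1 + θ1 * T) * exp (-θ1 * T))
        / (θ0 / θ1 + (1 - θ0 / θ1) * exp (-θ1 * T)))
    (hK : K = (J + (2 / θ1) * T) / (1 - exp (-θ1 * T))) :
    expLin θ1 0 K (-K) (-(2 / θ1)) T = expLin θ0 T 0 J 0 T ∧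
      deriv (expLin θ1 0 K (-K) (-(2 / θ1))) T = deriv (expLin θ0 T 0 J 0) T := by
  have hE : exp (-θ1 * T) < 1 := exp_lt_one_iff.2 (by nlinarith)
  have hden : 0 < θ0 / θ1 + (1 - θ0 / θ1) * exp (-θ1 * T) := by
    have : 0 < θ0 / θ1 * (1 - exp (-θ1 * T)) := mul_pos (div_pos hθ0 hθ1) (sub_pos.2 hE)
    nlinarith [exp_pos (-θ1 * T)]
  rw [deriv_expLin, deriv_expLin]
  simp only [expLin, sub_zero, sub_self, mul_zero, exp_zero]
  rw [hK]
  set E := exp (-θ1 * T)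
  constructor
  · field_simp [(sub_pos.2 hE).ne']
    ring
  · linear_combination threshold_value_smooth_pasting hθ1.ne' hE.ne hden.ne' hJ

/-- Analytic characterization of the expected cost `J^T` of the threshold policy
(Theorem 8, fluid model). With `θ1 > θ0 > 0`, `T > 0`,
`J(T) = (2/θ1²) (1 - (1 + θ1 T) exp (-θ1 T)) / (θ0/θ1 + (1 - θ0/θ1) exp (-θ1 T))`, and
`J^T` defined piecewise by
`J^T(D) = (J(T) + (2/θ1) T) (1 - exp (-θ1 D)) / (1 - exp (-θ1 T)) - (2/θ1) D` for `D ≤ T`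
and `J^T(D) = exp (-θ0 (D - T)) J(T)` for `D ≥ T`: `J^T` is continuously differentiable on
`(0, ∞)` (the two branches agree in value and first derivative at `T`), is twice
continuously differentiable on `(0, T)` and on `(T, ∞)`, satisfies
`(J^T)'' + θ1 (J^T)' + 2 = 0` on `(0, T)` and `(J^T)'' + θ0 (J^T)' = 0` on `(T, ∞)`,
`J^T(0) = 0`, and `J^T(D) → 0` as `D → ∞`. -/
theorem threshold_cost_characterization (θ0 θ1 T : ℝ)
    (hθ0 : 0 < θ0) (hθ01 : θ0 < θ1) (hT : 0 < T)
    (JT : ℝ)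
    (hJT : JT = (2 / θ1 ^ 2) * (1 - (1 + θ1 * T) * Real.exp (-θ1 * T))
        / (θ0 / θ1 + (1 - θ0 / θ1) * Real.exp (-θ1 * T)))
    (low high Jfun : ℝ → ℝ)
    (hlow : ∀ D : ℝ, low D = (JT + (2 / θ1) * T) * (1 - Real.exp (-θ1 * D))
        / (1 - Real.exp (-θ1 * T)) - (2 / θ1) * D)
    (hhigh : ∀ D : ℝ, high D = Real.exp (-θ0 * (D - T)) * JT)
    (hfun : ∀ D : ℝ, Jfun D = if D ≤ T then low D else high D) :
    low T = high T ∧ deriv low T = deriv high T ∧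
    ContDiffOn ℝ 1 Jfun (Ioi 0) ∧
    ContDiffOn ℝ 2 Jfun (Ioo 0 T) ∧ ContDiffOn ℝ 2 Jfun (Ioi T) ∧
    (∀ D ∈ Ioo 0 T, deriv (deriv Jfun) D + θ1 * deriv Jfun D + 2 = 0) ∧
    (∀ D ∈ Ioi T, deriv (deriv Jfun) D + θ0 * deriv Jfun D = 0) ∧
    Jfun 0 = 0 ∧
    Tendsto Jfun atTop (nhds 0) := by
  have hθ1 : 0 < θ1 := hθ0.trans hθ01
  have hJ0 : Jfun 0 = 0 := by simp [hfun, hT.le, hlow]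
  set K := (JT + (2 / θ1) * T) / (1 - exp (-θ1 * T)) with hK
  obtain rfl : low = expLin θ1 0 K (-K) (-(2 / θ1)) := funext fun D => by
    rw [hlow, expLin, sub_zero]
    ring
  obtain rfl : high = expLin θ0 T 0 JT 0 := funext fun D => by
    rw [hhigh, expLin]
    ring
  obtain ⟨hval, hder⟩ := threshold_branches_paste hθ0 hθ1 hT hJT hK
  have hJlow : EqOn Jfun _ (Iio T) := fun D hD => (hfun D).trans (if_pos (le_of_lt hD))
  have hJhigh : EqOn Jfun _ (Ioi T) := fun D hD => (hfun D).trans (if_neg (not_le.2 hD))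
  refine ⟨hval, hder, ?_, contDiff_expLin.contDiffOn.congr fun D hD => hJlow hD.2,
    contDiff_expLin.contDiffOn.congr hJhigh, fun D hD => ?_, fun D hD => ?_, hJ0, ?_⟩
  · rw [funext hfun]
    exact (contDiff_one_piecewise_le contDiff_expLin contDiff_expLin hval hder).contDiffOn
  · rw [deriv_deriv_add_eq_of_eqOn_expLin isOpen_Iio hJlow hD.2, mul_neg,
      mul_div_cancel₀ _ hθ1.ne']
    ring
  · rw [deriv_deriv_add_eq_of_eqOn_expLin isOpen_Ioi hJhigh hD, mul_zero]
  · exact (tendsto_expLin_atTop hθ0).congr'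
      (hJhigh.symm.eventuallyEq_of_mem (Ioi_mem_atTop T))
end
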